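/- arXiv:2311.02960 — 5 statements merged into one kernel-verified Lean document; each statement's English description precedes it below -/
import Mathlib

section
/- If Q has orthonormal columns, A is a symmetric invertible K×K matrix, and QAQᵀ has compact eigenvalue decomposition UΛUᵀ with U having orthonormal columns and Λ diagonal invertible, then QQᵀ = UUᵀ. -/
open Matrix

/-!
Since `Λ` is invertible, the columns of `U` lie in the range of `UΛUᵀ = QAQᵀ`, hence in the range
of `Q`, so `QQᵀU = U`; symmetrically `UUᵀQ = Q` because `A` is invertible. Two symmetric matrices
`P, P'` with `P'P = P` and `PP' = P'` coincide, since `P = Pᵀ = (P'P)ᵀ = PP' = P'`.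
-/

namespace Matrix

variable {m n R : Type*} [Fintype m] [Fintype n]

theorem mul_transpose_mul_of_conj_eq [DecidableEq n] [Semiring R] {Q U : Matrix m n R}
    {A M : Matrix n n R} (hQ : Qᵀ * Q = 1) (hU : Uᵀ * U = 1) (hM : IsUnit M)
    (h : U * M * Uᵀ = Q * A * Qᵀ) :
    Q * Qᵀ * U = U := by
  obtain ⟨M', hMM'⟩ := hM.exists_right_inv
  have hUM : Q * Qᵀ * U * M = U * M := by
    calc Q * Qᵀ * U * M = Q * Qᵀ * U * M * (Uᵀ * U) := by rw [hU, Matrix.mul_one]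
      _ = Q * Qᵀ * (U * M * Uᵀ) * U := by simp only [Matrix.mul_assoc]
      _ = Q * (Qᵀ * Q) * A * Qᵀ * U := by rw [h]; simp only [Matrix.mul_assoc]
      _ = U * M * (Uᵀ * U) := by rw [hQ, Matrix.mul_one, ← h, Matrix.mul_assoc _ Uᵀ]
      _ = U * M := by rw [hU, Matrix.mul_one]
  calc Q * Qᵀ * U = Q * Qᵀ * U * M * M' := by rw [Matrix.mul_assoc _ M, hMM', Matrix.mul_one]
    _ = U := by rw [hUM, Matrix.mul_assoc, hMM', Matrix.mul_one]

theorem eq_of_mul_eq_of_mul_eq [CommSemiring R] {P P' : Matrix n n R} (hP : Pᵀ = P)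
    (hP' : P'ᵀ = P') (h₁ : P' * P = P) (h₂ : P * P' = P') : P = P' :=
  calc P = (P' * P)ᵀ := by rw [h₁, hP]
    _ = P' := by rw [transpose_mul, hP, hP', h₂]

end Matrix

theorem QQt_eq_UUt_general {d K : ℕ}
    (Q U : Matrix (Fin d) (Fin K) ℝ) (A Λ : Matrix (Fin K) (Fin K) ℝ)
    (hQ : Qᵀ * Q = 1) (hU : Uᵀ * U = 1)
    (hAunit : IsUnit A)
    (hΛunit : IsUnit Λ)
    (hdecomp : U * Λ * Uᵀ = Q * A * Qᵀ) :
    Q * Qᵀ = U * Uᵀ := by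
  have hQU : Q * Qᵀ * U = U := mul_transpose_mul_of_conj_eq hQ hU hΛunit hdecomp
  have hUQ : U * Uᵀ * Q = Q := mul_transpose_mul_of_conj_eq hU hQ hAunit hdecomp.symm
  refine eq_of_mul_eq_of_mul_eq (by simp) (by simp) ?_ ?_
  · rw [← Matrix.mul_assoc, hUQ]
  · rw [← Matrix.mul_assoc, hQU]

/-- If `Q ∈ ℝ^{d×K}` has orthonormal columns, `A ∈ ℝ^{K×K}` is symmetric and
invertible, and `QAQᵀ = UΛUᵀ` with `U` having orthonormal columns and `Λ`
diagonal and invertible, then `QQᵀ = UUᵀ`. -/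
theorem QQt_eq_UUt {d K : ℕ} (hdK : K < d)
    (Q U : Matrix (Fin d) (Fin K) ℝ) (A Λ : Matrix (Fin K) (Fin K) ℝ)
    (hQ : Qᵀ * Q = 1) (hU : Uᵀ * U = 1)
    (hAsymm : Aᵀ = A) (hAunit : IsUnit A)
    (hΛdiag : Λ.IsDiag) (hΛunit : IsUnit Λ)
    (hdecomp : U * Λ * Uᵀ = Q * A * Qᵀ) :
    Q * Qᵀ = U * Uᵀ :=
  QQt_eq_UUt_general Q U A Λ hQ hU hAunit hΛunit hdecomp
end

section
/- If the data matrix is θ-nearly orthonormal with N = nK samples grouped into K classes of size n, and X̄ is the matrix repeating each class mean n times, then the squared Frobenius norm of X − X̄ lies between N − K − 4θ and N − K + 4θ. -/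
/-!
Let `G = XᵀX`, whose entries differ from those of the identity by at most `ε = θ / N`. The
within-class scatter is `tr G - (1/n) ∑ₖ ∑_{a,b} G_{(k,a),(k,b)}`, which equals `N - K` for
`G = 1`. Replacing `G` by `1` costs at most `N ε = θ` in the trace and `K n² ε / n = θ` in the
block sums, so the scatter is within `2θ` of `N - K`.
-/

open Finset in
theorem Finset.sum_sq_sub_mean {ι : Type*} (s : Finset ι) (x : ι → ℝ) :
    ∑ a ∈ s, (x a - (∑ b ∈ s, x b) / #s) ^ 2 = ∑ a ∈ s, x a ^ 2 - (∑ b ∈ s, x b) ^ 2 / #s := by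
  set m := (∑ b ∈ s, x b) / #s with hm
  have hcard : (#s : ℝ) * m = ∑ b ∈ s, x b := by
    rcases s.eq_empty_or_nonempty with rfl | hs
    · simp
    · exact mul_div_cancel₀ _ (by exact_mod_cast hs.card_pos.ne')
  calc ∑ a ∈ s, (x a - m) ^ 2
      = ∑ a ∈ s, x a ^ 2 - 2 * (∑ a ∈ s, x a) * m + #s * m ^ 2 := by
        simp only [sub_sq, sum_add_distrib, sum_sub_distrib, sum_const, nsmul_eq_mul, ← sum_mul,
          ← mul_sum]
    _ = ∑ a ∈ s, x a ^ 2 - (∑ b ∈ s, x b) * m := by rw [← hcard]; ring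
    _ = ∑ a ∈ s, x a ^ 2 - (∑ b ∈ s, x b) ^ 2 / #s := by rw [hm]; ring

theorem Finset.abs_sum_le_card_mul {ι : Type*} {s : Finset ι} {f : ι → ℝ} {ε : ℝ}
    (h : ∀ i ∈ s, |f i| ≤ ε) : |∑ i ∈ s, f i| ≤ s.card * ε :=
  (Finset.abs_sum_le_sum_abs f s).trans <| by
    simpa using Finset.sum_le_card_nsmul s (fun i => |f i|) ε h

namespace Matrix

variable {m κ ι : Type*} [Fintype m] [Fintype κ] [Fintype ι]

def classBlockSum (G : Matrix (κ × ι) (κ × ι) ℝ) : ℝ :=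
  ∑ k, ∑ a, ∑ b, G (k, a) (k, b)

theorem classBlockSum_sub (A B : Matrix (κ × ι) (κ × ι) ℝ) :
    classBlockSum (A - B) = classBlockSum A - classBlockSum B := by
  simp only [classBlockSum, sub_apply, Finset.sum_sub_distrib]

theorem classBlockSum_one [DecidableEq κ] [DecidableEq ι] :
    classBlockSum (1 : Matrix (κ × ι) (κ × ι) ℝ) = Fintype.card κ * Fintype.card ι := by
  simp [classBlockSum, one_apply]

theorem abs_classBlockSum_le {G : Matrix (κ × ι) (κ × ι) ℝ} {ε : ℝ} (h : ∀ c c', |G c c'| ≤ ε) :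
    |classBlockSum G| ≤ Fintype.card κ * Fintype.card ι ^ 2 * ε := by
  calc |classBlockSum G| ≤ Fintype.card κ * (Fintype.card ι * (Fintype.card ι * ε)) := by
        refine Finset.abs_sum_le_card_mul fun k _ => Finset.abs_sum_le_card_mul fun a _ =>
          Finset.abs_sum_le_card_mul fun b _ => h _ _
    _ = Fintype.card κ * Fintype.card ι ^ 2 * ε := by ring

theorem abs_trace_le {n : Type*} [Fintype n] {A : Matrix n n ℝ} {ε : ℝ} (h : ∀ c, |A c c| ≤ ε) :
    |trace A| ≤ Fintype.card n * ε :=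
  Finset.abs_sum_le_card_mul fun c _ => h c

theorem sum_sq_sub_classMean (X : Matrix m (κ × ι) ℝ) :
    ∑ i, ∑ c, (X i c - (∑ j, X i (c.1, j)) / Fintype.card ι) ^ 2
      = trace (Xᵀ * X) - classBlockSum (Xᵀ * X) / Fintype.card ι := by
  have hmean (i : m) (k : κ) := Finset.sum_sq_sub_mean Finset.univ fun a => X i (k, a)
  simp only [Finset.card_univ] at hmean
  simp only [Fintype.sum_prod_type, hmean, Finset.sum_sub_distrib]
  simp only [trace, classBlockSum, diag_apply, mul_apply, transpose_apply, sq, Finset.sum_mul_sum,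
    Finset.sum_div]
  congr 1
  · rw [Fintype.sum_prod_type, Finset.sum_comm]
    exact Finset.sum_congr rfl fun k _ => Finset.sum_comm
  · rw [Finset.sum_comm]
    refine Finset.sum_congr rfl fun k _ => ?_
    rw [Finset.sum_comm]
    refine Finset.sum_congr rfl fun a _ => ?_
    rw [Finset.sum_comm]

theorem abs_sum_sq_sub_classMean_sub_le [DecidableEq κ] [DecidableEq ι] [Nonempty ι]
    (X : Matrix m (κ × ι) ℝ) {ε : ℝ} (h : ∀ c c', |(Xᵀ * X - 1 : Matrix _ _ ℝ) c c'| ≤ ε) :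
    |∑ i, ∑ c, (X i c - (∑ j, X i (c.1, j)) / Fintype.card ι) ^ 2
        - (Fintype.card κ * Fintype.card ι - Fintype.card κ)|
      ≤ 2 * (Fintype.card κ * Fintype.card ι * ε) := by
  have hn : (0 : ℝ) < Fintype.card ι := by exact_mod_cast Fintype.card_pos
  set E : Matrix (κ × ι) (κ × ι) ℝ := Xᵀ * X - 1 with hE
  have hdev : trace (Xᵀ * X) - classBlockSum (Xᵀ * X) / Fintype.card ι
        - (Fintype.card κ * Fintype.card ι - Fintype.card κ)
      = trace E - classBlockSum E / Fintype.card ι := by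
    rw [hE, trace_sub, trace_one, classBlockSum_sub, classBlockSum_one, Fintype.card_prod]
    push_cast
    field_simp
    ring
  have htrace : |trace E| ≤ Fintype.card κ * Fintype.card ι * ε := by
    simpa using abs_trace_le fun c => h c c
  have hblock := abs_classBlockSum_le h
  rw [sum_sq_sub_classMean, hdev]
  calc |trace E - classBlockSum E / Fintype.card ι|
      ≤ |trace E| + |classBlockSum E| / Fintype.card ι := by
        simpa [abs_div] using abs_sub (trace E) (classBlockSum E / Fintype.card ι)
    _ ≤ Fintype.card κ * Fintype.card ι * ε
          + Fintype.card κ * Fintype.card ι ^ 2 * ε / Fintype.card ι := by gcongr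
    _ = 2 * (Fintype.card κ * Fintype.card ι * ε) := by field_simp; ring

end Matrix

open Matrix in
theorem frobSq_deviation_bounds_general {d K n : ℕ} (hn : 0 < n) (hK : 0 < K)
    (X : Matrix (Fin d) (Fin K × Fin n) ℝ) (θ : ℝ) (hθ0 : 0 ≤ θ)
    (hnorm : ∀ c, |(∑ i, X i c ^ 2) - 1| ≤ θ / (n * K))
    (hinner : ∀ c c', c ≠ c' → |∑ i, X i c * X i c'| ≤ θ / (n * K))
    (Xbar : Matrix (Fin d) (Fin K × Fin n) ℝ)
    (hXbar : Xbar = Matrix.of fun i c => (∑ j, X i (c.1, j)) / n) :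
    (n * K : ℝ) - K - 4 * θ ≤ ∑ i, ∑ c, (X i c - Xbar i c) ^ 2 ∧
    (∑ i, ∑ c, (X i c - Xbar i c) ^ 2) ≤ (n * K : ℝ) - K + 4 * θ := by
  have hgram : ∀ c c', |(Xᵀ * X - 1 : Matrix _ _ ℝ) c c'| ≤ θ / (n * K) := by
    intro c c'
    rcases eq_or_ne c c' with rfl | hcc'
    · simpa [mul_apply, sq] using hnorm c
    · simpa [mul_apply, hcc'] using hinner c c' hcc'
  have : NeZero n := ⟨hn.ne'⟩
  have hdev := abs_sum_sq_sub_classMean_sub_le X hgram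
  simp only [Fintype.card_fin] at hdev
  have hθN : (K : ℝ) * n * (θ / (n * K)) = θ := by field_simp
  rw [hθN] at hdev
  subst hXbar
  simp only [of_apply]
  constructor <;> linarith [abs_le.mp hdev]

/-- For θ-nearly orthonormal data `X ∈ ℝ^{d×N}` with `N = nK` balanced classes
and `X̄` the matrix repeating each class mean `n` times, the squared Frobenius
norm of `X − X̄` lies between `N − K − 4θ` and `N − K + 4θ`. -/
theorem frobSq_deviation_bounds {d K n : ℕ} (hn : 0 < n) (hK : 0 < K)
    (X : Matrix (Fin d) (Fin K × Fin n) ℝ) (θ : ℝ) (hθ0 : 0 ≤ θ) (hθ : θ < 1 / 4)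
    (hnorm : ∀ c, |(∑ i, X i c ^ 2) - 1| ≤ θ / (n * K))
    (hinner : ∀ c c', c ≠ c' → |∑ i, X i c * X i c'| ≤ θ / (n * K))
    (Xbar : Matrix (Fin d) (Fin K × Fin n) ℝ)
    (hXbar : Xbar = Matrix.of fun i c => (∑ j, X i (c.1, j)) / n) :
    (n * K : ℝ) - K - 4 * θ ≤ ∑ i, ∑ c, (X i c - Xbar i c) ^ 2 ∧
    (∑ i, ∑ c, (X i c - Xbar i c) ^ 2) ≤ (n * K : ℝ) - K + 4 * θ :=
  frobSq_deviation_bounds_general hn hK X θ hθ0 hnorm hinner Xbar hXbar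
end

section
/- Under the θ-near-orthonormality assumption with balanced classes, the operator norm of X − X̄ (X̄ the class-mean-repeated matrix) is at most √(1+4θ). -/
open scoped BigOperators
open Matrix

/-- Euclidean norm of a real vector. -/
noncomputable def euclNorm {n : Type*} [Fintype n] (v : n → ℝ) : ℝ :=
  Real.sqrt (∑ i, v i ^ 2)

/-!
Subtracting class means is `v ↦ v - P v` for the averaging map `P`, which is self-adjoint and
idempotent, so `‖v - P v‖² = ‖v‖² - ‖P v‖² ≤ ‖v‖²`, and `(X - X̄) v = X (v - P v)`. The Gram matrix
`Xᵀ X` differs entrywise from the identity by at most `θ / N`, `N` the number of columns, so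
`‖X w‖² ≤ ‖w‖² + (θ / N) (∑ |wᵢ|)² ≤ (1 + θ) ‖w‖²` by Cauchy–Schwarz.
-/

theorem euclNorm_eq_sqrt_dotProduct {ι : Type*} [Fintype ι] (v : ι → ℝ) :
    euclNorm v = √(v ⬝ᵥ v) := by
  simp only [euclNorm, dotProduct, sq]

section QuadraticForm

variable {m ι : Type*} [Fintype m] [Fintype ι]

theorem dotProduct_mulVec_le_of_abs_le {A : Matrix ι ι ℝ} {δ : ℝ} (hδ : 0 ≤ δ)
    (hA : ∀ i j, |A i j| ≤ δ) (w : ι → ℝ) :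
    w ⬝ᵥ A *ᵥ w ≤ δ * Fintype.card ι * (w ⬝ᵥ w) := by
  have hCS : (∑ i, |w i|) ^ 2 ≤ Fintype.card ι * (w ⬝ᵥ w) := by
    simpa [dotProduct, ← sq] using
      sq_sum_le_card_mul_sum_sq (s := Finset.univ) (f := fun i => |w i|)
  calc w ⬝ᵥ A *ᵥ w = ∑ i, ∑ j, w i * A i j * w j := by
        simp only [dotProduct, mulVec, Finset.mul_sum, mul_assoc]
    _ ≤ ∑ i, ∑ j, |w i| * δ * |w j| := by
        refine Finset.sum_le_sum fun i _ => Finset.sum_le_sum fun j _ => ?_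
        calc w i * A i j * w j ≤ |w i * A i j * w j| := le_abs_self _
          _ = |w i| * |A i j| * |w j| := by rw [abs_mul, abs_mul]
          _ ≤ |w i| * δ * |w j| := by gcongr; exact hA i j
    _ = δ * (∑ i, |w i|) ^ 2 := by
        rw [sq, Finset.sum_mul_sum, Finset.mul_sum]
        exact Finset.sum_congr rfl fun i _ => by rw [Finset.mul_sum]; ring_nf
    _ ≤ δ * Fintype.card ι * (w ⬝ᵥ w) := by
        rw [mul_assoc]; gcongr

def IsNearOrthonormal [DecidableEq ι] (X : Matrix m ι ℝ) (θ : ℝ) : Prop :=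
  ∀ c c', |(Xᵀ * X) c c' - (1 : Matrix ι ι ℝ) c c'| ≤ θ / Fintype.card ι

theorem IsNearOrthonormal.mulVec_dotProduct_self_le [DecidableEq ι] {X : Matrix m ι ℝ} {θ : ℝ}
    (hθ : 0 ≤ θ) (hX : IsNearOrthonormal X θ) (w : ι → ℝ) :
    X *ᵥ w ⬝ᵥ X *ᵥ w ≤ (1 + θ) * (w ⬝ᵥ w) := by
  have hgram : X *ᵥ w ⬝ᵥ X *ᵥ w = w ⬝ᵥ w + w ⬝ᵥ (Xᵀ * X - 1) *ᵥ w := by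
    rw [sub_mulVec, one_mulVec, dotProduct_sub, add_sub_cancel, ← mulVec_mulVec,
      dotProduct_mulVec w, vecMul_transpose]
  have hθN : θ / Fintype.card ι * Fintype.card ι ≤ θ := by
    rcases eq_or_ne (Fintype.card ι : ℝ) 0 with h | h
    · simpa [h] using hθ
    · rw [div_mul_cancel₀ _ h]
  have hww : 0 ≤ w ⬝ᵥ w := by simpa using dotProduct_self_star_nonneg w
  calc X *ᵥ w ⬝ᵥ X *ᵥ w ≤ w ⬝ᵥ w + θ / Fintype.card ι * Fintype.card ι * (w ⬝ᵥ w) := by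
        rw [hgram]
        gcongr
        exact dotProduct_mulVec_le_of_abs_le (by positivity) (fun c c' => by simpa using hX c c') w
    _ ≤ (1 + θ) * (w ⬝ᵥ w) := by nlinarith

end QuadraticForm

section ClassMean

variable {κ ι : Type*} [Fintype ι]

noncomputable def classMean (v : κ × ι → ℝ) (c : κ × ι) : ℝ :=
  (∑ j, v (c.1, j)) / Fintype.card ι

theorem classMean_classMean (v : κ × ι → ℝ) : classMean (classMean v) = classMean v := by
  funext c
  rcases eq_or_ne (Fintype.card ι : ℝ) 0 with h | h
  · simp [classMean, h]
  · simp only [classMean, Finset.sum_const, Finset.card_univ, nsmul_eq_mul]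
    field_simp

variable [Fintype κ]

theorem classMean_dotProduct (u v : κ × ι → ℝ) : classMean u ⬝ᵥ v = u ⬝ᵥ classMean v := by
  simp only [dotProduct, classMean, Fintype.sum_prod_type]
  refine Finset.sum_congr rfl fun k _ => ?_
  rw [← Finset.sum_mul, ← Finset.mul_sum]
  ring

theorem sub_classMean_dotProduct_self_le (v : κ × ι → ℝ) :
    (v - classMean v) ⬝ᵥ (v - classMean v) ≤ v ⬝ᵥ v := by
  have hidem : classMean v ⬝ᵥ classMean v = v ⬝ᵥ classMean v := by
    rw [classMean_dotProduct, classMean_classMean]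
  have hnonneg : 0 ≤ classMean v ⬝ᵥ classMean v := by
    simpa using dotProduct_self_star_nonneg (classMean v)
  simp only [sub_dotProduct, dotProduct_sub, dotProduct_comm (classMean v) v] at hidem hnonneg ⊢
  linarith

theorem mulVec_classMean {m : Type*} (X : Matrix m (κ × ι) ℝ) (v : κ × ι → ℝ) :
    (of fun i => classMean (X i)) *ᵥ v = X *ᵥ classMean v := by
  funext i
  exact classMean_dotProduct (X i) v

end ClassMean

theorem opNorm_deviation_bound_general {d K n : ℕ}
    (X : Matrix (Fin d) (Fin K × Fin n) ℝ) (θ : ℝ) (hθ0 : 0 ≤ θ)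
    (hnorm : ∀ c, |(∑ i, X i c ^ 2) - 1| ≤ θ / (n * K))
    (hinner : ∀ c c', c ≠ c' → |∑ i, X i c * X i c'| ≤ θ / (n * K))
    (Xbar : Matrix (Fin d) (Fin K × Fin n) ℝ)
    (hXbar : Xbar = Matrix.of fun i c => (∑ j, X i (c.1, j)) / n) :
    ∀ v : Fin K × Fin n → ℝ,
      euclNorm ((X - Xbar).mulVec v) ≤ Real.sqrt (1 + 4 * θ) * euclNorm v := by
  intro v
  have hX : IsNearOrthonormal X θ := by
    intro c c'
    have hN : θ / Fintype.card (Fin K × Fin n) = θ / (n * K) := by simp [mul_comm]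
    rw [hN, mul_apply, one_apply]
    by_cases h : c = c'
    · subst h; simpa [sq] using hnorm c
    · simpa [h] using hinner c c' h
  have hXbar' : Xbar = of fun i => classMean (X i) := by
    ext i c
    simp [hXbar, classMean]
  rw [hXbar', sub_mulVec, mulVec_classMean, ← mulVec_sub, euclNorm_eq_sqrt_dotProduct,
    euclNorm_eq_sqrt_dotProduct, ← Real.sqrt_mul (by linarith)]
  gcongr
  calc _ ≤ (1 + θ) * ((v - classMean v) ⬝ᵥ (v - classMean v)) :=
        hX.mulVec_dotProduct_self_le hθ0 _
    _ ≤ (1 + 4 * θ) * (v ⬝ᵥ v) := by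
        refine mul_le_mul (by linarith) (sub_classMean_dotProduct_self_le v) ?_ (by linarith)
        simpa using dotProduct_self_star_nonneg (v - classMean v)

/-- For θ-nearly orthonormal balanced data, the operator norm of `X − X̄`
(where `X̄` repeats each class mean) is at most `√(1+4θ)`:
`‖(X − X̄)v‖ ≤ √(1+4θ)·‖v‖` for every `v`. -/
theorem opNorm_deviation_bound {d K n : ℕ} (hn : 0 < n) (hK : 0 < K)
    (X : Matrix (Fin d) (Fin K × Fin n) ℝ) (θ : ℝ) (hθ0 : 0 ≤ θ) (hθ : θ < 1 / 4)
    (hnorm : ∀ c, |(∑ i, X i c ^ 2) - 1| ≤ θ / (n * K))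
    (hinner : ∀ c c', c ≠ c' → |∑ i, X i c * X i c'| ≤ θ / (n * K))
    (Xbar : Matrix (Fin d) (Fin K × Fin n) ℝ)
    (hXbar : Xbar = Matrix.of fun i c => (∑ j, X i (c.1, j)) / n) :
    ∀ v : Fin K × Fin n → ℝ,
      euclNorm ((X - Xbar).mulVec v) ≤ Real.sqrt (1 + 4 * θ) * euclNorm v :=
  opNorm_deviation_bound_general X θ hθ0 hnorm hinner Xbar hXbar
end

section
/- If W_L and W_{L−1} are δ-balanced in the sense that ‖W_LᵀW_L − W_{L−1}W_{L−1}ᵀ‖_F ≤ δ, then the vector of squared singular values of W_L differs from the corresponding leading squared singular values of W_{L−1} by at most δ in a Frobenius sense: ‖Σ_LᵀΣ_L − Σ_{L−1}²‖_F ≤ δ, where Σ_L, Σ_{L−1} are the diagonal singular value matrices. -/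
/-!
Both Gram matrices are orthogonally diagonalised: `W_Lᵀ W_L = V_L diag(a) V_Lᵀ` and
`W Wᵀ = U diag(b) Uᵀ`, where `a`, `b` are the decreasing squared singular values (those of `W_L`
padded by zeros). With `Q = V_Lᵀ U`, expanding the squared Frobenius norm gives
`‖V_L diag(a) V_Lᵀ - U diag(b) Uᵀ‖² = |a|² + |b|² - 2 aᵀ (Q ⊙ Q) b`, and `Q ⊙ Q` is doubly
stochastic. By Birkhoff's theorem the linear functional `M ↦ aᵀ M b` is maximised over doubly
stochastic matrices at a permutation matrix, and by the rearrangement inequality at the identity;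
there the right-hand side is `‖diag(a) - diag(b)‖²` (Hoffman–Wielandt for sorted spectra).
-/

open scoped BigOperators
open Matrix

/-- Frobenius norm of a real matrix. -/
noncomputable def frobNorm {m n : Type*} [Fintype m] [Fintype n] (A : Matrix m n ℝ) : ℝ :=
  Real.sqrt (∑ i, ∑ j, A i j ^ 2)

section DoublyStochastic

variable {R n : Type*} [Field R] [LinearOrder R] [IsStrictOrderedRing R] [Fintype n] [DecidableEq n]

theorem Monovary.dotProduct_vecMul_le_of_mem_doublyStochastic {a b : n → R} (hab : Monovary a b)
    {M : Matrix n n R} (hM : M ∈ doublyStochastic R n) : a ᵥ* M ⬝ᵥ b ≤ a ⬝ᵥ b := by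
  have hlin : IsLinearMap R fun M : Matrix n n R => a ᵥ* M ⬝ᵥ b :=
    ⟨fun M N => by rw [vecMul_add, add_dotProduct],
      fun c M => by rw [vecMul_smul, smul_dotProduct]⟩
  have hM' : M ∈ convexHull R {σ.permMatrix R | σ : Equiv.Perm n} := by
    rwa [← doublyStochastic_eq_convexHull_permMatrix]
  refine convexHull_min ?_ (convex_halfSpace_le hlin (a ⬝ᵥ b)) hM'
  rintro _ ⟨σ, rfl⟩
  simpa [vecMul_permMatrix, dotProduct] using hab.sum_comp_perm_mul_le_sum_mul (σ := σ.symm)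

theorem hadamard_self_mem_doublyStochastic {Q : Matrix n n R} (hQ : Qᵀ * Q = 1) :
    Q ⊙ Q ∈ doublyStochastic R n := by
  have hQ' : Q * Qᵀ = 1 := mul_eq_one_comm.mp hQ
  refine mem_doublyStochastic_iff_sum.mpr ⟨fun i j => mul_self_nonneg _, fun i => ?_, fun j => ?_⟩
  · simpa [mul_apply] using congr_fun₂ hQ' i i
  · simpa [mul_apply] using congr_fun₂ hQ j j

end DoublyStochastic

section SVD

variable {R m n p : Type*} [CommRing R] [Fintype m] [Fintype n]

theorem transpose_mul_self_of_svd [DecidableEq m] {U : Matrix m m R} (hU : Uᵀ * U = 1)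
    (S : Matrix m n R) (V : Matrix p n R) : (U * S * Vᵀ)ᵀ * (U * S * Vᵀ) = V * (Sᵀ * S) * Vᵀ := by
  simp only [transpose_mul, transpose_transpose, Matrix.mul_assoc]
  rw [← Matrix.mul_assoc Uᵀ, hU, Matrix.one_mul]

theorem mul_transpose_self_of_svd [Fintype p] [DecidableEq n] {V : Matrix p n R} (hV : Vᵀ * V = 1)
    (U : Matrix m m R) (S : Matrix m n R) : (U * S * Vᵀ) * (U * S * Vᵀ)ᵀ = U * (S * Sᵀ) * Uᵀ := by
  simp only [transpose_mul, transpose_transpose, Matrix.mul_assoc]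
  rw [← Matrix.mul_assoc Vᵀ, hV, Matrix.one_mul]

end SVD

section Trace

variable {R m n : Type*} [CommRing R] [Fintype m] [Fintype n]

theorem sum_sq_eq_trace_mul_transpose (A : Matrix m n R) :
    ∑ i, ∑ j, A i j ^ 2 = trace (A * Aᵀ) := by
  simp only [sq]
  exact sum_hadamard_eq A A

variable [DecidableEq n]

theorem trace_conj_diagonal_mul_conj_diagonal (P Q : Matrix n n R) (a b : n → R) :
    trace (P * diagonal a * Pᵀ * (Q * diagonal b * Qᵀ)) = a ᵥ* ((Pᵀ * Q) ⊙ (Pᵀ * Q)) ⬝ᵥ b := by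
  rw [dotProduct_vecMul_hadamard, transpose_mul, transpose_mul, diagonal_transpose,
    transpose_transpose]
  conv_lhs => rw [Matrix.mul_assoc, Matrix.mul_assoc, trace_mul_comm]
  simp only [Matrix.mul_assoc]

theorem sum_sq_conj_diagonal_sub_conj_diagonal {P Q : Matrix n n R} (hP : Pᵀ * P = 1)
    (hQ : Qᵀ * Q = 1) (a b : n → R) :
    ∑ i, ∑ j, (P * diagonal a * Pᵀ - Q * diagonal b * Qᵀ) i j ^ 2 =
      a ⬝ᵥ a + b ⬝ᵥ b - 2 * (a ᵥ* ((Pᵀ * Q) ⊙ (Pᵀ * Q)) ⬝ᵥ b) := by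
  have hsymm (P : Matrix n n R) (c : n → R) : (P * diagonal c * Pᵀ)ᵀ = P * diagonal c * Pᵀ := by
    simp [Matrix.mul_assoc]
  have hsq {P : Matrix n n R} (hP : Pᵀ * P = 1) (c : n → R) :
      trace (P * diagonal c * Pᵀ * (P * diagonal c * Pᵀ)) = c ⬝ᵥ c := by
    rw [trace_conj_diagonal_mul_conj_diagonal, hP, one_hadamard, diag_one, Pi.one_def,
      diagonal_one, vecMul_one]
  rw [sum_sq_eq_trace_mul_transpose, transpose_sub, hsymm, hsymm, sub_mul, mul_sub, mul_sub,
    trace_sub, trace_sub, trace_sub, trace_mul_comm (Q * _ * _), hsq hP, hsq hQ,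
    trace_conj_diagonal_mul_conj_diagonal]
  ring

end Trace

theorem frobNorm_diagonal_sub_diagonal_le {n : Type*} [Fintype n] [DecidableEq n]
    {a b : n → ℝ} (hab : Monovary a b) {P Q : Matrix n n ℝ} (hP : Pᵀ * P = 1)
    (hQ : Qᵀ * Q = 1) :
    frobNorm (diagonal a - diagonal b) ≤ frobNorm (P * diagonal a * Pᵀ - Q * diagonal b * Qᵀ) := by
  have hPQ : (Pᵀ * Q)ᵀ * (Pᵀ * Q) = 1 := by
    rw [transpose_mul, transpose_transpose, Matrix.mul_assoc, ← Matrix.mul_assoc P,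
      mul_eq_one_comm.mp hP, Matrix.one_mul, hQ]
  have hdiag := sum_sq_conj_diagonal_sub_conj_diagonal (P := 1) (Q := 1) (by simp) (by simp) a b
  simp only [Matrix.one_mul, transpose_one, Matrix.mul_one, one_hadamard, diag_one, Pi.one_def,
    diagonal_one, vecMul_one] at hdiag
  apply Real.sqrt_le_sqrt
  rw [hdiag, sum_sq_conj_diagonal_sub_conj_diagonal hP hQ]
  linarith [hab.dotProduct_vecMul_le_of_mem_doublyStochastic
    (hadamard_self_mem_doublyStochastic hPQ)]

section RectDiagonal

variable {R : Type*} {K : ℕ}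

def zeroExtend [Zero R] (σ : Fin K → R) (d : ℕ) : Fin d → R :=
  fun j => if h : (j : ℕ) < K then σ ⟨j, h⟩ else 0

def rectDiagonal [Zero R] (σ : Fin K → R) (d : ℕ) : Matrix (Fin K) (Fin d) R :=
  of fun i j => if (i : ℕ) = j then σ i else 0

theorem Antitone.zeroExtend [Preorder R] [Zero R] {σ : Fin K → R} (hσ : Antitone σ)
    (h0 : ∀ i, 0 ≤ σ i) (d : ℕ) : Antitone (zeroExtend σ d) := by
  intro j k hjk
  by_cases hk : (k : ℕ) < K
  · have hj : (j : ℕ) < K := lt_of_le_of_lt hjk hk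
    simpa [_root_.zeroExtend, hk, hj] using hσ (Fin.mk_le_mk.mpr hjk)
  · by_cases hj : (j : ℕ) < K
    · simpa [_root_.zeroExtend, hk, hj] using h0 _
    · simp [_root_.zeroExtend, hk, hj]

theorem rectDiagonal_transpose_mul_self [CommSemiring R] (σ : Fin K → R) (d : ℕ) :
    (rectDiagonal σ d)ᵀ * rectDiagonal σ d = diagonal (zeroExtend (fun i => σ i * σ i) d) := by
  ext j k
  simp only [rectDiagonal, mul_apply, transpose_apply, of_apply, diagonal_apply, zeroExtend]
  by_cases hj : (j : ℕ) < K
  · rw [Finset.sum_eq_single ⟨j, hj⟩]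
    · by_cases hjk : j = k
      · subst hjk; simp [hj]
      · simp [hjk, Fin.val_ne_of_ne hjk]
    · intro i _ hi
      have hij : (i : ℕ) ≠ j := fun h => hi (Fin.ext h)
      simp [hij]
    · simp
  · rw [Finset.sum_eq_zero]
    · simp [hj]
    · intro i _
      simp [show (i : ℕ) ≠ j by omega]

end RectDiagonal

theorem sigma_balancedness_general {K d : ℕ} (δ : ℝ)
    (WL : Matrix (Fin K) (Fin d) ℝ) (W : Matrix (Fin d) (Fin d) ℝ)
    (sL : Fin K → ℝ) (s : Fin d → ℝ)
    (UL : Matrix (Fin K) (Fin K) ℝ) (VL U V : Matrix (Fin d) (Fin d) ℝ)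
    (hUL : ULᵀ * UL = 1) (hVL : VLᵀ * VL = 1) (hU : Uᵀ * U = 1) (hV : Vᵀ * V = 1)
    (hsL : Antitone sL) (hsL0 : ∀ i, 0 ≤ sL i)
    (hs : Antitone s) (hs0 : ∀ i, 0 ≤ s i)
    (SigL : Matrix (Fin K) (Fin d) ℝ)
    (hSigL : SigL = Matrix.of fun (i : Fin K) (j : Fin d) => if (i : ℕ) = (j : ℕ) then sL i else 0)
    (hWL : WL = UL * SigL * VLᵀ)
    (hW : W = U * Matrix.diagonal s * Vᵀ)
    (hbal : frobNorm (WLᵀ * WL - W * Wᵀ) ≤ δ) :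
    frobNorm (SigLᵀ * SigL - Matrix.diagonal s * Matrix.diagonal s) ≤ δ := by
  have hSig : SigL = rectDiagonal sL d := hSigL
  rw [hWL, hW, transpose_mul_self_of_svd hUL, mul_transpose_self_of_svd hV, diagonal_transpose]
    at hbal
  rw [hSig, rectDiagonal_transpose_mul_self, diagonal_mul_diagonal] at hbal ⊢
  have ha : Antitone (zeroExtend (fun i => sL i * sL i) d) :=
    Antitone.zeroExtend (fun i j h => mul_self_le_mul_self (hsL0 j) (hsL h))
      (fun i => mul_self_nonneg _) d
  have hb : Antitone fun i => s i * s i := fun i j h => mul_self_le_mul_self (hs0 j) (hs h)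
  exact (frobNorm_diagonal_sub_diagonal_le (ha.monovary hb) hVL hU).trans hbal

/-- If `W_L ∈ ℝ^{K×d}` and `W_{L−1} ∈ ℝ^{d×d}` are δ-balanced, i.e.
`‖W_LᵀW_L − W_{L−1}W_{L−1}ᵀ‖_F ≤ δ`, and `Σ_L`, `Σ_{L−1}` are their diagonal
matrices of singular values in decreasing order (given by SVDs), then
`‖Σ_LᵀΣ_L − Σ_{L−1}²‖_F ≤ δ`. -/
theorem sigma_balancedness {K d : ℕ} (hKd : K ≤ d) (δ : ℝ)
    (WL : Matrix (Fin K) (Fin d) ℝ) (W : Matrix (Fin d) (Fin d) ℝ)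
    (sL : Fin K → ℝ) (s : Fin d → ℝ)
    (UL : Matrix (Fin K) (Fin K) ℝ) (VL U V : Matrix (Fin d) (Fin d) ℝ)
    (hUL : ULᵀ * UL = 1) (hVL : VLᵀ * VL = 1) (hU : Uᵀ * U = 1) (hV : Vᵀ * V = 1)
    (hsL : Antitone sL) (hsL0 : ∀ i, 0 ≤ sL i)
    (hs : Antitone s) (hs0 : ∀ i, 0 ≤ s i)
    (SigL : Matrix (Fin K) (Fin d) ℝ)
    (hSigL : SigL = Matrix.of fun (i : Fin K) (j : Fin d) => if (i : ℕ) = (j : ℕ) then sL i else 0)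
    (hWL : WL = UL * SigL * VLᵀ)
    (hW : W = U * Matrix.diagonal s * Vᵀ)
    (hbal : frobNorm (WLᵀ * WL - W * Wᵀ) ≤ δ) :
    frobNorm (SigLᵀ * SigL - Matrix.diagonal s * Matrix.diagonal s) ≤ δ :=
  sigma_balancedness_general δ WL W sL s UL VL U V hUL hVL hU hV hsL hsL0 hs hs0 SigL hSigL hWL hW
    hbal
end

section
/- If exact balancedness W_{l+1}ᵀW_{l+1} = W_l W_lᵀ holds for all l ∈ [L−2] and ‖W_LᵀW_L − W_{L−1}W_{L−1}ᵀ‖_F ≤ δ, then the end-to-end Gram matrix satisfies ‖W_{L:1}ᵀW_{L:1} − (W_1ᵀW_1)^L‖_F ≤ δ · ∏_{l=1}^{L−1} ‖W_l‖². -/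
/-!
Write `Q = W_{L-1} ⋯ W_1`, so that `W_{L:1} = W_L Q`. Exact balancedness of the first `L - 1`
layers lets each `W_{l+1}ᵀ W_{l+1}` be traded for `W_l W_lᵀ`, and since
`Bᵀ (B Bᵀ)^m B = (Bᵀ B)^(m+1)` this telescopes to
`Qᵀ (W_{L-1} W_{L-1}ᵀ) Q = (W_1ᵀ W_1)^L`. Hence the defect is
`W_{L:1}ᵀ W_{L:1} - (W_1ᵀ W_1)^L = Qᵀ (W_Lᵀ W_L - W_{L-1} W_{L-1}ᵀ) Q`, whose Frobenius norm is at
most `‖Q‖² δ ≤ δ ∏ ‖W_l‖²`, because multiplying by a matrix scales the Frobenius norm by at most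
its operator norm, and the operator norm is submultiplicative.
-/

open scoped BigOperators
open Matrix

/-- The (ℓ₂ → ℓ₂) operator norm of a real matrix: the supremum of `‖Av‖` over
unit vectors `v`. -/
noncomputable def opNorm {m n : Type*} [Fintype m] [Fintype n] (A : Matrix m n ℝ) : ℝ :=
  sSup {r : ℝ | ∃ v : n → ℝ, euclNorm v = 1 ∧ r = euclNorm (A.mulVec v)}

-- `‖A‖` on matrices is the ℓ² → ℓ² operator norm throughout.
open scoped Matrix.Norms.L2Operator
open WithLp

section Norms

variable {m n p : Type*} [Fintype m] [Fintype n] [Fintype p]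

lemma euclNorm_eq_norm (v : n → ℝ) : euclNorm v = ‖toLp 2 v‖ := by
  simp [euclNorm, EuclideanSpace.norm_eq]

lemma opNorm_eq_l2_opNorm [DecidableEq n] (A : Matrix m n ℝ) : opNorm A = ‖A‖ := by
  rw [l2_opNorm_def, ← ContinuousLinearMap.sSup_sphere_eq_norm, opNorm]
  congr 1
  ext r
  simp only [Set.mem_ofPred_eq, Set.mem_image, mem_sphere_zero_iff_norm, euclNorm_eq_norm]
  constructor
  · rintro ⟨v, hv, rfl⟩
    exact ⟨toLp 2 v, hv, rfl⟩
  · rintro ⟨x, hx, rfl⟩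
    exact ⟨ofLp x, hx, rfl⟩

lemma l2_opNorm_transpose [DecidableEq m] [DecidableEq n] (A : Matrix m n ℝ) : ‖Aᵀ‖ = ‖A‖ := by
  rw [← conjTranspose_eq_transpose_of_trivial, l2_opNorm_conjTranspose]

lemma frobNorm_nonneg (A : Matrix m n ℝ) : 0 ≤ frobNorm A := Real.sqrt_nonneg _

lemma frobNorm_transpose (A : Matrix m n ℝ) : frobNorm Aᵀ = frobNorm A := by
  rw [frobNorm, frobNorm, Finset.sum_comm]
  rfl

lemma frobNorm_sq_eq_sum_norm_col_sq (A : Matrix m n ℝ) :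
    frobNorm A ^ 2 = ∑ j, ‖toLp 2 (Aᵀ j)‖ ^ 2 := by
  rw [frobNorm, Real.sq_sqrt (by positivity), Finset.sum_comm]
  simp [EuclideanSpace.norm_sq_eq]

lemma frobNorm_mul_le [DecidableEq n] (A : Matrix m n ℝ) (B : Matrix n p ℝ) :
    frobNorm (A * B) ≤ ‖A‖ * frobNorm B := by
  refine (sq_le_sq₀ (frobNorm_nonneg _) (by positivity [frobNorm_nonneg B])).mp ?_
  rw [mul_pow, frobNorm_sq_eq_sum_norm_col_sq, frobNorm_sq_eq_sum_norm_col_sq, Finset.mul_sum]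
  gcongr with j
  rw [← mul_pow]
  gcongr
  exact l2_opNorm_mulVec A (toLp 2 (Bᵀ j))

lemma frobNorm_transpose_mul_mul_le [DecidableEq m] [DecidableEq n] (Q : Matrix m n ℝ)
    (E : Matrix m m ℝ) : frobNorm (Qᵀ * E * Q) ≤ ‖Q‖ ^ 2 * frobNorm E := by
  calc frobNorm (Qᵀ * E * Q) = frobNorm (Qᵀ * (Qᵀ * Eᵀ)ᵀ) := by
        simp only [transpose_mul, transpose_transpose, Matrix.mul_assoc]
    _ ≤ ‖Qᵀ‖ * (‖Qᵀ‖ * frobNorm Eᵀ) := by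
        grw [frobNorm_mul_le, frobNorm_transpose, frobNorm_mul_le]
    _ = ‖Q‖ ^ 2 * frobNorm E := by
        rw [l2_opNorm_transpose, frobNorm_transpose]; ring

end Norms

section LayerProd

variable {n R : Type*} [Fintype n] [DecidableEq n]

noncomputable def layerProd [Semiring R] (W : ℕ → Matrix n n R) (k : ℕ) : Matrix n n R :=
  ((List.range k).reverse.map fun i => W (i + 1)).prod

lemma layerProd_zero [Semiring R] (W : ℕ → Matrix n n R) : layerProd W 0 = 1 := rfl

lemma layerProd_succ [Semiring R] (W : ℕ → Matrix n n R) (k : ℕ) :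
    layerProd W (k + 1) = W (k + 1) * layerProd W k := by
  simp [layerProd, List.range_succ]

lemma transpose_mul_pow_mul_self [CommSemiring R] (B : Matrix n n R) (m : ℕ) :
    Bᵀ * (B * Bᵀ) ^ m * B = (Bᵀ * B) ^ (m + 1) := by
  rw [← mul_pow_mul, Matrix.mul_assoc, ← pow_succ]

lemma transpose_layerProd_mul_pow_mul [CommSemiring R] {W : ℕ → Matrix n n R} {k : ℕ}
    (hbal : ∀ l, 1 ≤ l → l ≤ k → (W (l + 1))ᵀ * W (l + 1) = W l * (W l)ᵀ) (m : ℕ) :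
    (layerProd W (k + 1))ᵀ * (W (k + 1) * (W (k + 1))ᵀ) ^ m * layerProd W (k + 1) =
      ((W 1)ᵀ * W 1) ^ (k + 1 + m) := by
  induction k generalizing m with
  | zero =>
    rw [layerProd_succ, layerProd_zero, Matrix.mul_one, transpose_mul_pow_mul_self, zero_add,
      Nat.add_comm]
  | succ k ih =>
    calc (layerProd W (k + 2))ᵀ * (W (k + 2) * (W (k + 2))ᵀ) ^ m * layerProd W (k + 2)
        = (layerProd W (k + 1))ᵀ * ((W (k + 2))ᵀ * (W (k + 2) * (W (k + 2))ᵀ) ^ m * W (k + 2)) *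
            layerProd W (k + 1) := by
          simp only [layerProd_succ W (k + 1), transpose_mul, Matrix.mul_assoc]
      _ = (layerProd W (k + 1))ᵀ * (W (k + 1) * (W (k + 1))ᵀ) ^ (m + 1) *
            layerProd W (k + 1) := by
          rw [transpose_mul_pow_mul_self, hbal (k + 1) k.succ_pos le_rfl]
      _ = ((W 1)ᵀ * W 1) ^ (k + 2 + m) := by
          rw [ih fun l h1 h2 => hbal l h1 (h2.trans k.le_succ)]
          ring_nf

lemma norm_layerProd_le (W : ℕ → Matrix n n ℝ) (k : ℕ) :
    ‖layerProd W k‖ ≤ ∏ l ∈ Finset.range k, ‖W (l + 1)‖ := by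
  induction k with
  | zero =>
    rw [layerProd_zero, cstar_norm_def, map_one]
    exact ContinuousLinearMap.norm_id_le
  | succ k ih =>
    rw [layerProd_succ, Finset.prod_range_succ, mul_comm]
    exact (norm_mul_le _ _).trans (by gcongr)

end LayerProd

/-- If `W_{l+1}ᵀW_{l+1} = W_l W_lᵀ` for all `l ∈ [L−2]` and
`‖W_LᵀW_L − W_{L−1}W_{L−1}ᵀ‖_F ≤ δ`, then the end-to-end product
`P = W_L W_{L−1} ⋯ W_1` satisfies
`‖PᵀP − (W_1ᵀW_1)^L‖_F ≤ δ·∏_{l=1}^{L−1}‖W_l‖²`. -/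
theorem end_to_end_gram_bound {d K : ℕ} (L : ℕ) (hL : 2 ≤ L) (δ : ℝ)
    (W : ℕ → Matrix (Fin d) (Fin d) ℝ) (WL : Matrix (Fin K) (Fin d) ℝ)
    (hbal : ∀ l, 1 ≤ l → l ≤ L - 2 → (W (l + 1))ᵀ * W (l + 1) = W l * (W l)ᵀ)
    (hlast : frobNorm (WLᵀ * WL - W (L - 1) * (W (L - 1))ᵀ) ≤ δ)
    (P : Matrix (Fin K) (Fin d) ℝ)
    (hP : P = WL * (((List.range (L - 1)).reverse.map fun i => W (i + 1)).prod)) :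
    frobNorm (Pᵀ * P - ((W 1)ᵀ * W 1) ^ L) ≤
      δ * ∏ l ∈ Finset.range (L - 1), opNorm (W (l + 1)) ^ 2 := by
  obtain ⟨k, rfl⟩ := Nat.exists_eq_add_of_le' hL
  simp only [Nat.add_sub_cancel, show k + 2 - 1 = k + 1 by omega] at hbal hlast hP ⊢
  have htele := transpose_layerProd_mul_pow_mul hbal 1
  rw [pow_one] at htele
  change P = WL * layerProd W (k + 1) at hP
  set Q := layerProd W (k + 1)
  set E := WLᵀ * WL - W (k + 1) * (W (k + 1))ᵀ
  have hgram : Pᵀ * P - ((W 1)ᵀ * W 1) ^ (k + 2) = Qᵀ * E * Q := by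
    rw [← htele, hP]
    simp only [E, transpose_mul, Matrix.mul_sub, Matrix.sub_mul, Matrix.mul_assoc]
  simp only [hgram, opNorm_eq_l2_opNorm, Finset.prod_pow]
  calc frobNorm (Qᵀ * E * Q) ≤ ‖Q‖ ^ 2 * frobNorm E := frobNorm_transpose_mul_mul_le Q E
    _ ≤ (∏ l ∈ Finset.range (k + 1), ‖W (l + 1)‖) ^ 2 * δ := by
        gcongr
        exacts [frobNorm_nonneg E, norm_layerProd_le W (k + 1)]
    _ = δ * (∏ l ∈ Finset.range (k + 1), ‖W (l + 1)‖) ^ 2 := mul_comm _ _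
end
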